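/- Let X₁, ..., X_n be i.i.d. copies of a nonnegative random variable X with finite mean μ > 0, and let Ĝ = [binom(n,2)^{-1} ∑_{1≤i<j≤n} |X_i - X_j|]/(2 X̄) on the event ∑ X_k > 0 (and Ĝ = 0 otherwise), where X̄ = n^{-1}∑X_k. Then E[Ĝ] = (n/2) ∫₀^∞ E[|X₁ - X₂| exp(-z(X₁+X₂))] L(z)^{n-2} dz, where L(z) = E[exp(-zX)] is the Laplace transform of X, assuming the relevant integrals exist. -/

import Mathlib

/-!
Since an i.i.d. sample is exchangeable, each of the `n.choose 2` pairs `i < j` contributes the same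
`E[|X_i - X_j| / S]`, `S = ∑ X_k` (on `S = 0`, where `Ĝ = 0`, the ratio is `0` because `x / 0 = 0`).
Writing `1 / S = ∫₀^∞ e^{-zS} dz` and exchanging the integrals (Tonelli), independence splits
`E[|X_i - X_j| e^{-zS}]` into `E[|X_i - X_j| e^{-z(X_i + X_j)}]` times the Laplace transforms
`E[e^{-z X_k}] = mgf X (-z)` of the other `n - 2` variables.
-/

open MeasureTheory Set ProbabilityTheory

/-- The (upward-adjusted) Gini coefficient estimator from a sample `X 0, ..., X (n-1)`. -/
noncomputable def giniEstimator {Ω : Type*} (n : ℕ) (X : Fin n → Ω → ℝ) (ω : Ω) : ℝ :=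
  if 0 < ∑ k, X k ω then
    ((n.choose 2 : ℝ)⁻¹ * ∑ i, ∑ j, if i < j then |X i ω - X j ω| else 0)
      / (2 * ((∑ k, X k ω) / n))
  else 0

open scoped ENNReal

lemma giniEstimator_eq_of_sum_nonneg {Ω : Type*} {n : ℕ} (X : Fin n → Ω → ℝ) {ω : Ω}
    (hS : 0 ≤ ∑ k, X k ω) :
    giniEstimator n X ω = n / (2 * n.choose 2) *
      ∑ p ∈ Finset.univ.filter (fun p : Fin n × Fin n => p.1 < p.2),
        |X p.1 ω - X p.2 ω| / ∑ k, X k ω := by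
  rcases hS.lt_or_eq with hS | hS
  · rw [giniEstimator, if_pos hS, ← Finset.sum_div, Finset.sum_filter, Fintype.sum_prod_type]
    simp only [div_eq_mul_inv, mul_inv, inv_inv]
    ring
  · simp [giniEstimator, ← hS]

lemma abs_sub_le_sum_of_nonneg {ι : Type*} [Fintype ι] {x : ι → ℝ} (hx : ∀ k, 0 ≤ x k)
    (i j : ι) : |x i - x j| ≤ ∑ k, x k := by
  have hle : ∀ k, x k ≤ ∑ k, x k := fun k =>
    Finset.single_le_sum (fun k _ => hx k) (Finset.mem_univ k)
  exact abs_sub_le_iff.2 ⟨by linarith [hle i, hx j], by linarith [hle j, hx i]⟩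

lemma Equiv.Perm.exists_apply_eq_and_apply_eq {α : Type*} [DecidableEq α] {a b c d : α}
    (hab : a ≠ b) (hcd : c ≠ d) : ∃ σ : Equiv.Perm α, σ a = c ∧ σ b = d := by
  set τ := Equiv.swap a c
  have hτb : c ≠ τ b := by
    rw [← Equiv.swap_apply_left a c]
    exact τ.injective.ne hab
  exact ⟨Equiv.swap (τ b) d * τ, by simp [τ, Equiv.swap_apply_of_ne_of_ne hτb hcd], by simp⟩

lemma ofReal_div_eq_lintegral_Ioi_ofReal_mul_exp {a s : ℝ} (ha : 0 ≤ a) (has : a ≤ s) :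
    ENNReal.ofReal (a / s) = ∫⁻ z in Ioi 0, ENNReal.ofReal (a * Real.exp (-z * s)) := by
  rcases (ha.trans has).lt_or_eq with hs | hs
  · have hexp : ∫ z in Ioi 0, Real.exp (-s * z) = s⁻¹ := by
      rw [integral_exp_mul_Ioi (by linarith) 0]
      simp
    simp_rw [ENNReal.ofReal_mul ha, show ∀ z : ℝ, -z * s = -s * z from fun z => by ring]
    rw [lintegral_const_mul _ (by fun_prop), ← ofReal_integral_eq_lintegral_ofReal
      (integrableOn_exp_mul_Ioi (by linarith) 0) (ae_of_all _ fun z => (Real.exp_pos _).le),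
      hexp, ← ENNReal.ofReal_mul ha, div_eq_mul_inv]
  · obtain rfl : a = 0 := le_antisymm (hs ▸ has) ha
    simp

section

variable {Ω : Type*} [MeasurableSpace Ω] {P : Measure Ω}

lemma integrable_div_of_ae_le [IsFiniteMeasure P] {a s : Ω → ℝ} (ha : Measurable a)
    (hs : Measurable s) (h : ∀ᵐ ω ∂P, 0 ≤ a ω ∧ a ω ≤ s ω) :
    Integrable (fun ω => a ω / s ω) P := by
  refine Integrable.mono' (integrable_const 1) (ha.div hs).aestronglyMeasurable ?_
  filter_upwards [h] with ω ⟨ha0, has⟩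
  rw [Real.norm_eq_abs, abs_of_nonneg (div_nonneg ha0 (ha0.trans has))]
  exact div_le_one_of_le₀ has (ha0.trans has)

lemma integral_div_eq_integral_Ioi_integral_mul_exp [IsFiniteMeasure P] {a s : Ω → ℝ}
    (ha : Measurable a) (hs : Measurable s) (h : ∀ᵐ ω ∂P, 0 ≤ a ω ∧ a ω ≤ s ω) :
    ∫ ω, a ω / s ω ∂P = ∫ z in Ioi 0, ∫ ω, a ω * Real.exp (-z * s ω) ∂P := by
  set F : ℝ → ℝ≥0∞ := fun z => ∫⁻ ω, ENNReal.ofReal (a ω * Real.exp (-z * s ω)) ∂P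
  have hmeas : Measurable fun p : Ω × ℝ => ENNReal.ofReal (a p.1 * Real.exp (-p.2 * s p.1)) := by
    fun_prop
  have hF : Measurable F := hmeas.lintegral_prod_left'
  have hlint : ∫⁻ ω, ENNReal.ofReal (a ω / s ω) ∂P = ∫⁻ z in Ioi 0, F z := by
    rw [← lintegral_lintegral_swap hmeas.aemeasurable]
    exact lintegral_congr_ae
      (h.mono fun ω hω => ofReal_div_eq_lintegral_Ioi_ofReal_mul_exp hω.1 hω.2)
  have hfin : ∫⁻ z in Ioi 0, F z ≠ ∞ :=
    hlint ▸ (integrable_div_of_ae_le ha hs h).lintegral_lt_top.ne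
  rw [integral_eq_lintegral_of_nonneg_ae (h.mono fun ω hω => div_nonneg hω.1 (hω.1.trans hω.2))
    (ha.div hs).aestronglyMeasurable, hlint,
    ← integral_toReal hF.aemeasurable (ae_lt_top' hF.aemeasurable hfin)]
  refine integral_congr_ae (ae_of_all _ fun z => ?_)
  exact (integral_eq_lintegral_of_nonneg_ae
    (h.mono fun ω hω => mul_nonneg hω.1 (Real.exp_pos _).le) (by fun_prop)).symm

namespace ProbabilityTheory

lemma iIndepFun.identDistrib_comp_perm {ι β : Type*} [Fintype ι] [MeasurableSpace β]
    {X : ι → Ω → β} (hindep : iIndepFun X P) (hX : ∀ i, Measurable (X i))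
    (hid : ∀ i j, IdentDistrib (X i) (X j) P P) (σ : Equiv.Perm ι) :
    IdentDistrib (fun ω i => X (σ i) ω) (fun ω i => X i ω) P P where
  aemeasurable_fst := (measurable_pi_lambda _ fun i => hX (σ i)).aemeasurable
  aemeasurable_snd := (measurable_pi_lambda _ hX).aemeasurable
  map_eq := by
    rw [(hindep.precomp σ.injective).map_fun_eq_pi_map fun i => (hX _).aemeasurable,
      hindep.map_fun_eq_pi_map fun i => (hX i).aemeasurable]
    exact congrArg Measure.pi (funext fun i => (hid (σ i) i).map_eq)

lemma iIndepFun.identDistrib_pair_sum {ι : Type*} [Fintype ι] [DecidableEq ι]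
    {X : ι → Ω → ℝ} (hindep : iIndepFun X P) (hX : ∀ i, Measurable (X i))
    (hid : ∀ i j, IdentDistrib (X i) (X j) P P) {i j k l : ι} (hij : i ≠ j) (hkl : k ≠ l) :
    IdentDistrib (fun ω => (X i ω, X j ω, ∑ m, X m ω)) (fun ω => (X k ω, X l ω, ∑ m, X m ω))
      P P := by
  obtain ⟨σ, hσk, hσl⟩ := Equiv.Perm.exists_apply_eq_and_apply_eq hkl hij
  have hu : Measurable fun x : ι → ℝ => (x k, x l, ∑ m, x m) := by fun_prop
  convert (hindep.identDistrib_comp_perm hX hid σ).comp hu using 1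
  · funext ω
    simp [hσk, hσl, Equiv.sum_comp σ (fun m => X m ω)]
  · rfl

lemma iIndepFun.integral_mul_exp_neg_mul_sum {ι : Type*} [Fintype ι] [DecidableEq ι]
    {X : ι → Ω → ℝ} {Y : Ω → ℝ} (hindep : iIndepFun X P) (hX : ∀ i, Measurable (X i))
    (hid : ∀ i, IdentDistrib (X i) Y P P) {i j : ι} (hij : i ≠ j) {φ : ℝ → ℝ → ℝ}
    (hφ : Measurable (Function.uncurry φ)) (z : ℝ) :
    ∫ ω, φ (X i ω) (X j ω) * Real.exp (-z * ∑ k, X k ω) ∂P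
      = (∫ ω, φ (X i ω) (X j ω) * Real.exp (-z * (X i ω + X j ω)) ∂P)
        * mgf Y P (-z) ^ (Fintype.card ι - 2) := by
  set T : Finset ι := Finset.univ \ {i, j}
  have hsplit : ∀ ω, ∑ k, X k ω = (X i ω + X j ω) + ∑ k ∈ T, X k ω := fun ω => by
    rw [← Finset.sum_pair hij (f := fun k => X k ω), add_comm,
      Finset.sum_sdiff (Finset.subset_univ _)]
  have hi : i ∈ ({i, j} : Finset ι) := by simp
  have hj : j ∈ ({i, j} : Finset ι) := by simp
  have hu : Measurable fun v : ({i, j} : Finset ι) → ℝ =>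
      φ (v ⟨i, hi⟩) (v ⟨j, hj⟩) * Real.exp (-z * (v ⟨i, hi⟩ + v ⟨j, hj⟩)) := by
    fun_prop
  have hw : Measurable fun w : T → ℝ => Real.exp (-z * ∑ k, w k) := by fun_prop
  have hindep_split := (hindep.indepFun_finset _ T Finset.disjoint_sdiff hX).comp hu hw
  have hfactor := hindep_split.integral_fun_mul_eq_mul_integral (by fun_prop) (by fun_prop)
  have hsumT : ∀ ω, ∑ k : T, X k ω = ∑ k ∈ T, X k ω := fun ω =>
    Finset.sum_coe_sort T (fun k => X k ω)
  simp only [Function.comp_apply, hsumT] at hfactor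
  have hcard : T.card = Fintype.card ι - 2 := by
    rw [Finset.card_univ_sdiff, Finset.card_pair hij]
  have hmgf : ∫ ω, Real.exp (-z * ∑ k ∈ T, X k ω) ∂P = mgf Y P (-z) ^ (Fintype.card ι - 2) := by
    rw [← hcard, ← Finset.prod_eq_pow_card fun k _ => mgf_congr_of_identDistrib _ _ (hid k) (-z),
      ← hindep.mgf_sum hX]
    simp only [mgf, Finset.sum_apply]
  have hexp : ∀ ω, Real.exp (-z * ∑ k, X k ω)
      = Real.exp (-z * (X i ω + X j ω)) * Real.exp (-z * ∑ k ∈ T, X k ω) := fun ω => by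
    rw [hsplit, mul_add, Real.exp_add]
  simp_rw [hexp, ← mul_assoc, hfactor, hmgf]

lemma iIndepFun.integral_giniEstimator_eq_integral_abs_sub_div_sum [IsFiniteMeasure P] {n : ℕ}
    (hn : 2 ≤ n) {X : Fin n → Ω → ℝ} (hindep : iIndepFun X P) (hX : ∀ i, Measurable (X i))
    (hid : ∀ i j, IdentDistrib (X i) (X j) P P) (hnonneg : ∀ᵐ ω ∂P, ∀ k, 0 ≤ X k ω)
    {i j : Fin n} (hij : i ≠ j) :
    ∫ ω, giniEstimator n X ω ∂P = n / 2 * ∫ ω, |X i ω - X j ω| / ∑ k, X k ω ∂P := by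
  set pairs := Finset.univ.filter (fun p : Fin n × Fin n => p.1 < p.2)
  have hexch : ∀ p ∈ pairs, ∫ ω, |X p.1 ω - X p.2 ω| / ∑ k, X k ω ∂P
      = ∫ ω, |X i ω - X j ω| / ∑ k, X k ω ∂P := fun p hp =>
    ((hindep.identDistrib_pair_sum hX hid (Finset.mem_filter.1 hp).2.ne hij).comp
      (by fun_prop : Measurable fun q : ℝ × ℝ × ℝ => |q.1 - q.2.1| / q.2.2)).integral_eq
  have hint : ∀ p : Fin n × Fin n, Integrable (fun ω => |X p.1 ω - X p.2 ω| / ∑ k, X k ω) P :=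
    fun p => integrable_div_of_ae_le (by fun_prop) (by fun_prop) (hnonneg.mono fun ω hω =>
      ⟨abs_nonneg _, abs_sub_le_sum_of_nonneg hω p.1 p.2⟩)
  have hC : (n.choose 2 : ℝ) ≠ 0 := by exact_mod_cast (Nat.choose_pos hn).ne'
  calc ∫ ω, giniEstimator n X ω ∂P
      = ∫ ω, n / (2 * n.choose 2) * ∑ p ∈ pairs, |X p.1 ω - X p.2 ω| / ∑ k, X k ω ∂P :=
        integral_congr_ae (hnonneg.mono fun ω hω =>
          giniEstimator_eq_of_sum_nonneg X (Finset.sum_nonneg fun k _ => hω k))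
    _ = n / (2 * n.choose 2) * (n.choose 2 * ∫ ω, |X i ω - X j ω| / ∑ k, X k ω ∂P) := by
        rw [integral_const_mul, integral_finsetSum _ fun p _ => hint p,
          Finset.sum_congr rfl hexch, Finset.sum_const, Fintype.card_product_filter_lt,
          Fintype.card_fin, nsmul_eq_mul]
    _ = n / 2 * ∫ ω, |X i ω - X j ω| / ∑ k, X k ω ∂P := by
        field_simp

end ProbabilityTheory

end

theorem expectation_gini_estimator
    {Ω : Type*} [MeasurableSpace Ω] (P : Measure Ω) [IsProbabilityMeasure P]
    (n : ℕ) (hn : 2 ≤ n)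
    (X₀ : Ω → ℝ) (hpos : ∀ ω, 0 ≤ X₀ ω)
    (X : Fin n → Ω → ℝ) (hX : ∀ i, Measurable (X i))
    (hid : ∀ i, IdentDistrib (X i) X₀ P P)
    (hindep : iIndepFun X P) :
    ∫ ω, giniEstimator n X ω ∂P
      = (n / 2) * ∫ z in Ioi (0:ℝ),
          (∫ ω, |X ⟨0, by omega⟩ ω - X ⟨1, by omega⟩ ω|
              * Real.exp (-z * (X ⟨0, by omega⟩ ω + X ⟨1, by omega⟩ ω)) ∂P)
            * (∫ ω, Real.exp (-z * X₀ ω) ∂P) ^ (n - 2) := by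
  have hnonneg : ∀ᵐ ω ∂P, ∀ k, 0 ≤ X k ω :=
    ae_all_iff.2 fun k => (hid k).symm.ae_mem_snd measurableSet_Ici (ae_of_all _ hpos)
  have h01 : (⟨0, by omega⟩ : Fin n) ≠ ⟨1, by omega⟩ := by simp [Fin.ext_iff]
  rw [hindep.integral_giniEstimator_eq_integral_abs_sub_div_sum hn hX
      (fun i j => (hid i).trans (hid j).symm) hnonneg h01,
    integral_div_eq_integral_Ioi_integral_mul_exp (by fun_prop) (by fun_prop)
      (hnonneg.mono fun ω hω => ⟨abs_nonneg _, abs_sub_le_sum_of_nonneg hω _ _⟩)]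
  congr 2 with z
  rw [hindep.integral_mul_exp_neg_mul_sum hX hid h01 (φ := fun a b => |a - b|) (by fun_prop),
    Fintype.card_fin, mgf]
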